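/- arXiv:2402.13486 — 3 statements merged into one kernel-verified Lean document; each statement's English description precedes it below -/
import Mathlib

section
/- The cyclic group generated by the rotatory reflection ργ (rotation by 2π/q about an axis composed with reflection in the orthogonal plane) contains -I if and only if q ≡ 2 mod 4. -/
/-!
Both generators act as `(x, y, z) ↦ (R_θ (x, y), ε z)` for a plane rotation `R_θ` and a sign `ε`,
so `(ργ)ⁿ` is the rotation by `2πn/q` combined with `z ↦ (-1)ⁿ z`. It equals `-I` exactly when
`n` is odd and `2πn/q` is an odd multiple of `π`, i.e. `m q = 2 n` with `m, n` odd; comparing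
the powers of `2` on both sides, this is solvable iff `q` is twice an odd number.
-/

open Real

noncomputable def rotZScale (θ ε : ℝ) : Matrix (Fin 3) (Fin 3) ℝ :=
  !![cos θ, -sin θ, 0; sin θ, cos θ, 0; 0, 0, ε]

lemma rotZScale_mul (θ θ' ε ε' : ℝ) :
    rotZScale θ ε * rotZScale θ' ε' = rotZScale (θ + θ') (ε * ε') := by
  ext i j
  fin_cases i <;> fin_cases j <;>
    simp [rotZScale, Matrix.mul_apply, Fin.sum_univ_three, cos_add, sin_add] <;> ring

lemma rotZScale_zero_one : rotZScale 0 1 = 1 := by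
  ext i j
  fin_cases i <;> fin_cases j <;> simp [rotZScale]

lemma rotZScale_pow (θ ε : ℝ) (n : ℕ) : rotZScale θ ε ^ n = rotZScale (n * θ) (ε ^ n) := by
  induction n with
  | zero => simp [rotZScale_zero_one]
  | succ n ih => rw [pow_succ, ih, rotZScale_mul, pow_succ, Nat.cast_succ, add_one_mul]

lemma rotZScale_eq_neg_one_iff (θ ε : ℝ) : rotZScale θ ε = -1 ↔ cos θ = -1 ∧ ε = -1 := by
  constructor
  · intro h
    exact ⟨by simpa [rotZScale] using congr_fun₂ h 0 0, by simpa [rotZScale] using congr_fun₂ h 2 2⟩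
  · rintro ⟨hcos, rfl⟩
    have hsin : sin θ = 0 := sin_eq_zero_iff_cos_eq.2 (Or.inr hcos)
    ext i j
    fin_cases i <;> fin_cases j <;> simp [rotZScale, hcos, hsin]

lemma cos_nat_mul_two_pi_div_eq_neg_one_iff {q : ℕ} (hq : 0 < q) (n : ℕ) :
    cos (n * (2 * π / q)) = -1 ↔ ∃ m : ℤ, Odd m ∧ m * q = 2 * n := by
  have hq' : (q : ℝ) ≠ 0 := by positivity
  rw [cos_eq_neg_one_iff]
  constructor
  · rintro ⟨k, hk⟩
    refine ⟨2 * k + 1, odd_two_mul_add_one k, ?_⟩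
    have : (2 * k + 1) * (q : ℝ) = 2 * n := by
      field_simp at hk
      linear_combination hk
    exact_mod_cast this
  · rintro ⟨_, ⟨k, rfl⟩, hkq⟩
    have hkq' : (2 * k + 1) * (q : ℝ) = 2 * n := by exact_mod_cast hkq
    refine ⟨k, ?_⟩
    field_simp
    linear_combination hkq'

lemma mod_four_eq_two_iff_exists_odd_mul_eq_two_mul (q : ℕ) :
    q % 4 = 2 ↔ ∃ n : ℕ, (∃ m : ℤ, Odd m ∧ m * q = 2 * n) ∧ Odd n := by
  constructor
  · intro h
    exact ⟨q / 2, ⟨1, odd_one, by push_cast; omega⟩, ⟨q / 4, by omega⟩⟩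
  · rintro ⟨n, ⟨m, hm, hmq⟩, hn⟩
    obtain ⟨r, hr⟩ : Even (q : ℤ) := by
      have : Even (m * q) := ⟨n, by rw [hmq]; ring⟩
      exact (Int.even_mul.1 this).resolve_left (Int.not_even_iff_odd.2 hm)
    have hr_odd : Odd r := by
      have hmr : m * r = n :=
        mul_left_cancel₀ two_ne_zero (by linear_combination hmq - m * hr)
      exact (Int.odd_mul.1 (hmr ▸ hn.natCast)).2
    obtain ⟨s, hs⟩ := hr_odd
    omega

/-- The cyclic group generated by the rotatory reflection `ργ` (rotation by
`2π/q` about the `z`-axis composed with reflection in the `xy`-plane)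
contains `-I` if and only if `q ≡ 2 (mod 4)`. -/
theorem antipodal_in_rotatory_reflection_group_iff (q : ℕ) (hq : 0 < q)
    (ρ γ : Matrix (Fin 3) (Fin 3) ℝ)
    (hρ : ρ = !![Real.cos (2 * Real.pi / q), -Real.sin (2 * Real.pi / q), 0;
                 Real.sin (2 * Real.pi / q),  Real.cos (2 * Real.pi / q), 0;
                 0, 0, 1])
    (hγ : γ = !![1, 0, 0; 0, 1, 0; 0, 0, -1]) :
    ((-1 : Matrix (Fin 3) (Fin 3) ℝ) ∈ Submonoid.powers (ρ * γ)) ↔ q % 4 = 2 := by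
  have hρ' : ρ = rotZScale (2 * π / q) 1 := hρ
  have hγ' : γ = rotZScale 0 (-1) := by
    rw [hγ]; ext i j; fin_cases i <;> fin_cases j <;> simp [rotZScale]
  have hργ : ρ * γ = rotZScale (2 * π / q) (-1) := by
    rw [hρ', hγ', rotZScale_mul, add_zero, one_mul]
  rw [hργ, Submonoid.mem_powers_iff, mod_four_eq_two_iff_exists_odd_mul_eq_two_mul]
  simp only [rotZScale_pow, rotZScale_eq_neg_one_iff, cos_nat_mul_two_pi_div_eq_neg_one_iff hq,
    neg_one_pow_eq_neg_one_iff_odd (by norm_num : (-1 : ℝ) ≠ 1)]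
end

section
/- For odd q = 2k+1 ≥ 3, the wheel graph W_q admits a strong involution: the map τ sending a_i to the triangular face (a_{i+k}, a_{i+k+1}, c) and c to the outer face (a₁,…,a_q) is a duality isomorphism satisfying u ∈ τ(v) ⟺ v ∈ τ(u) and v ∉ τ(v) for all vertices v. -/
/-- The wheel graph `W_q`: a `q`-cycle `a₀, …, a_{q-1}` together with a
central vertex (the `Sum.inr` vertex) joined to all cycle vertices. -/
def wheel (q : ℕ) [NeZero q] : SimpleGraph (Fin q ⊕ Unit) :=
  SimpleGraph.fromRel (fun x y =>
    match x, y with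
    | Sum.inl i, Sum.inl j => j = i + 1
    | Sum.inl _, Sum.inr _ => True
    | _, _ => False)

/-- Face incidence for the standard plane embedding of the wheel: the face
`Sum.inl i` is the triangle `(aᵢ, aᵢ₊₁, c)` and `Sum.inr` is the outer face
bounded by the `q`-cycle. -/
def wheelFaceMem (q : ℕ) [NeZero q] : (Fin q ⊕ Unit) → (Fin q ⊕ Unit) → Prop :=
  fun v F =>
    match F with
    | Sum.inl i => v = Sum.inl i ∨ v = Sum.inl (i + 1) ∨ v = Sum.inr ()
    | Sum.inr _ => ∃ j : Fin q, v = Sum.inl j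

/-- The planar dual of the wheel: two faces are adjacent when they share an
edge of the wheel. -/
def wheelDual (q : ℕ) [NeZero q] : SimpleGraph (Fin q ⊕ Unit) :=
  SimpleGraph.fromRel (fun F F' =>
    ∃ u v : Fin q ⊕ Unit, u ≠ v ∧ (wheel q).Adj u v ∧
      wheelFaceMem q u F ∧ wheelFaceMem q v F ∧
      wheelFaceMem q u F' ∧ wheelFaceMem q v F')

open scoped Fin.NatCast

open scoped Fin.CommRing

lemma wheel_adj_ll (q : ℕ) [NeZero q] (i j : Fin q) :
    (wheel q).Adj (Sum.inl i) (Sum.inl j) ↔ i ≠ j ∧ (j = i + 1 ∨ i = j + 1) := by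
  simp [wheel, SimpleGraph.fromRel_adj]

lemma wheel_adj_lr (q : ℕ) [NeZero q] (i : Fin q) :
    (wheel q).Adj (Sum.inl i) (Sum.inr ()) := by
  simp [wheel, SimpleGraph.fromRel_adj]

lemma mem_tri (q : ℕ) [NeZero q] (v : Fin q ⊕ Unit) (m : Fin q) :
    wheelFaceMem q v (Sum.inl m) ↔ v = Sum.inl m ∨ v = Sum.inl (m + 1) ∨ v = Sum.inr () :=
  Iff.rfl

lemma mem_outer (q : ℕ) [NeZero q] (v : Fin q ⊕ Unit) :
    wheelFaceMem q v (Sum.inr ()) ↔ ∃ j : Fin q, v = Sum.inl j := Iff.rfl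

lemma h0' (k : ℕ) : (k : Fin (2*k+1)) + ((k : Fin (2*k+1)) + 1) = 0 := by
  have h := Fin.natCast_self (2*k+1)
  push_cast at h
  linear_combination h

lemma one_ne (k : ℕ) (hk : 1 ≤ k) (m : Fin (2*k+1)) : m ≠ m + 1 := by
  intro h
  have h1 : ((1:ℕ) : Fin (2*k+1)) = 0 := by push_cast; linear_combination -h
  have := Fin.val_cast_of_lt (show 1 < 2*k+1 by omega)
  rw [h1] at this; simp at this

lemma dual_aux (k : ℕ) (m n : Fin (2*k+1)) (hne' : m ≠ n)
    (h : ∃ u v : Fin (2*k+1) ⊕ Unit, u ≠ v ∧ (wheel (2*k+1)).Adj u v ∧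
      wheelFaceMem (2*k+1) u (Sum.inl m) ∧ wheelFaceMem (2*k+1) v (Sum.inl m) ∧
      wheelFaceMem (2*k+1) u (Sum.inl n) ∧ wheelFaceMem (2*k+1) v (Sum.inl n)) :
    n = m + 1 ∨ m = n + 1 := by
  have h0 := h0' k
  obtain ⟨u, v, huv, hadj, hum, hvm, hun, hvn⟩ := h
  rcases u with a | ⟨⟩ <;> rcases v with b | ⟨⟩
  · exfalso
    apply hne'
    rw [mem_tri] at hum hvm hun hvn
    have hab : a ≠ b := by simpa using huv
    simp only [Sum.inl.injEq, reduceCtorEq, or_false] at hum hvm hun hvn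
    have hs1 : a + b = m + m + 1 := by
      rcases hum with h1 | h1 <;> rcases hvm with h2 | h2 <;>
        first
        | exact absurd (h1.trans h2.symm) hab
        | linear_combination h1 + h2
    have hs2 : a + b = n + n + 1 := by
      rcases hun with h1 | h1 <;> rcases hvn with h2 | h2 <;>
        first
        | exact absurd (h1.trans h2.symm) hab
        | linear_combination h1 + h2
    have h2mn : m + m = n + n := by linear_combination hs2 - hs1
    linear_combination ((k : Fin (2*k+1)) + 1) * h2mn - (m - n) * h0
  · rw [mem_tri] at hum hun
    simp only [Sum.inl.injEq, reduceCtorEq, or_false] at hum hun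
    rcases hum with h1 | h1 <;> rcases hun with h2 | h2
    · exact absurd (h1.symm.trans h2) hne'
    · right; linear_combination h2 - h1
    · left; linear_combination h1 - h2
    · exact absurd (by linear_combination h2 - h1) hne'
  · rw [mem_tri] at hvm hvn
    simp only [Sum.inl.injEq, reduceCtorEq, or_false] at hvm hvn
    rcases hvm with h1 | h1 <;> rcases hvn with h2 | h2
    · exact absurd (h1.symm.trans h2) hne'
    · right; linear_combination h2 - h1
    · left; linear_combination h1 - h2
    · exact absurd (by linear_combination h2 - h1) hne'
  · exact absurd rfl huv

lemma dual_tri_tri (k : ℕ) (hk : 1 ≤ k) (m n : Fin (2*k+1)) :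
    (wheelDual (2*k+1)).Adj (Sum.inl m) (Sum.inl n) ↔ m ≠ n ∧ (n = m + 1 ∨ m = n + 1) := by
  constructor
  · rintro ⟨hne, h | h⟩
    · have hne' : m ≠ n := by simpa using hne
      exact ⟨hne', dual_aux k m n hne' h⟩
    · have hne' : m ≠ n := by simpa using hne
      exact ⟨hne', (dual_aux k n m hne'.symm h).symm⟩
  · rintro ⟨hne, h | h⟩
    · refine ⟨by simpa using hne, Or.inl ⟨Sum.inl n, Sum.inr (), by simp, wheel_adj_lr _ n, ?_, ?_, ?_, ?_⟩⟩ <;>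
        simp [mem_tri, h]
    · refine ⟨by simpa using hne, Or.inl ⟨Sum.inl m, Sum.inr (), by simp, wheel_adj_lr _ m, ?_, ?_, ?_, ?_⟩⟩ <;>
        simp [mem_tri, h]

lemma dual_tri_outer (k : ℕ) (hk : 1 ≤ k) (m : Fin (2*k+1)) :
    (wheelDual (2*k+1)).Adj (Sum.inl m) (Sum.inr ()) := by
  refine ⟨by simp, Or.inl ⟨Sum.inl m, Sum.inl (m+1), by simpa using one_ne k hk m,
    (wheel_adj_ll _ m (m+1)).2 ⟨one_ne k hk m, Or.inl rfl⟩, ?_, ?_, ?_, ?_⟩⟩ <;>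
    simp [mem_tri, mem_outer]


/-- For odd `q = 2k+1 ≥ 3`, the wheel graph admits a strong involution: the
map sending `aᵢ` to the triangular face `(aᵢ₊ₖ, aᵢ₊ₖ₊₁, c)` and `c` to the
outer face is a duality isomorphism (a bijection from vertices to faces
carrying adjacency to adjacency of the dual) satisfying
`u ∈ τ(v) ↔ v ∈ τ(u)` and `v ∉ τ(v)`. -/
theorem odd_wheel_strong_involution (q k : ℕ) [NeZero q]
    (hqk : q = 2 * k + 1) (hq : 3 ≤ q)
    (τ : Fin q ⊕ Unit → Fin q ⊕ Unit)
    (hτ : τ = Sum.elim (fun i => Sum.inl (i + (k : Fin q))) (fun _ => Sum.inr ())) :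
    Function.Bijective τ ∧
    (∀ u v : Fin q ⊕ Unit, (wheel q).Adj u v ↔ (wheelDual q).Adj (τ u) (τ v)) ∧
    (∀ u v : Fin q ⊕ Unit, wheelFaceMem q u (τ v) ↔ wheelFaceMem q v (τ u)) ∧
    (∀ v : Fin q ⊕ Unit, ¬ wheelFaceMem q v (τ v)) := by
  subst hτ hqk
  have hk : 1 ≤ k := by omega
  have h0 := h0' k
  have hkne : (k : Fin (2*k+1)) ≠ 0 := by
    have h := Fin.val_cast_of_lt (show k < 2*k+1 by omega)
    intro h1; rw [h1] at h; simp at h; omega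
  have hk1ne : (k : Fin (2*k+1)) + 1 ≠ 0 := by
    have h := Fin.val_cast_of_lt (show k + 1 < 2*k+1 by omega)
    push_cast at h
    intro h1; rw [h1] at h; simp at h
  refine ⟨⟨?_, ?_⟩, ?_, ?_, ?_⟩
  · -- injective
    rintro (i | ⟨⟩) (j | ⟨⟩) h <;> simp_all
  · -- surjective
    rintro (i | ⟨⟩)
    · exact ⟨Sum.inl (i - k), by simp⟩
    · exact ⟨Sum.inr (), rfl⟩
  · -- adjacency
    rintro (i | ⟨⟩) (j | ⟨⟩)
    · rw [wheel_adj_ll]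
      simp only [Sum.elim_inl]
      rw [dual_tri_tri k hk]
      constructor
      · rintro ⟨hne, h | h⟩
        · exact ⟨by intro hc; exact hne (by linear_combination hc), Or.inl (by linear_combination h)⟩
        · exact ⟨by intro hc; exact hne (by linear_combination hc), Or.inr (by linear_combination h)⟩
      · rintro ⟨hne, h | h⟩
        · exact ⟨by intro hc; exact hne (by linear_combination hc), Or.inl (by linear_combination h)⟩
        · exact ⟨by intro hc; exact hne (by linear_combination hc), Or.inr (by linear_combination h)⟩
    · simp only [Sum.elim_inl, Sum.elim_inr]
      constructor
      · intro _; exact dual_tri_outer k hk _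
      · intro _; exact wheel_adj_lr _ i
    · simp only [Sum.elim_inl, Sum.elim_inr]
      constructor
      · intro h; exact ((wheelDual (2*k+1)).adj_symm (dual_tri_outer k hk _))
      · intro _; exact ((wheel (2*k+1)).adj_symm (wheel_adj_lr _ j))
    · constructor
      · intro h; exact absurd rfl h.ne
      · intro h; exact absurd rfl h.ne
  · -- face symmetry
    rintro (i | ⟨⟩) (j | ⟨⟩)
    · simp only [Sum.elim_inl, mem_tri, Sum.inl.injEq, reduceCtorEq, or_false]
      constructor
      · rintro (h | h)
        · right; linear_combination -h - h0
        · left; linear_combination -h - h0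
      · rintro (h | h)
        · right; linear_combination -h - h0
        · left; linear_combination -h - h0
    · simp [mem_tri, mem_outer]
    · simp [mem_tri, mem_outer]
    · simp [mem_outer]
  · -- no fixed incidence
    rintro (i | ⟨⟩)
    · simp only [Sum.elim_inl, mem_tri, Sum.inl.injEq, reduceCtorEq, or_false]
      rintro (h | h)
      · exact hkne (by linear_combination -h)
      · exact hk1ne (by linear_combination -h)
    · simp [mem_outer]
end

section
/- For even q = 2k, the wheel graph W_q does not admit a strong involution: any duality isomorphism τ must send the center c to the outer face and hence induce a map on the q-cycle, and for even q no such map satisfies both u ∈ τ(v) ⟺ v ∈ τ(u) and v ∉ τ(v). -/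
/-!
Irreflexivity forces `τ` to send the centre to the outer face (the centre lies on every
triangle), so `τ` restricts to an injection `ψ` of the cycle: `aᵢ` goes to the triangle
`(a_{ψ i}, a_{ψ i + 1}, c)`. Symmetry gives, at each `i`, either `ψ (ψ i) = i` or
`ψ (ψ i) = i - 1`, and the same alternative holds at `i` and `i + 1`. In the first case
`ψ i + i` is a constant `c`, and an `i` with `2 i ∈ {c, c + 1}` lies on its own triangle.
In the second case `ψ i = i + d`, and `ψ (ψ 0) = -1` says `2 d + 1 = 0`, impossible
modulo an even `q`.
-/

open Function

namespace Fin
open Fin.CommRing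

variable {q : ℕ} [NeZero q]

theorem apply_eq_apply_zero_of_apply_add_one {α : Sort*} {f : Fin q → α}
    (h : ∀ i, f (i + 1) = f i) (i : Fin q) : f i = f 0 := by
  have hcast : ∀ m : ℕ, f m = f 0 := by
    intro m
    induction m with
    | zero => simp
    | succ m ih => rw [Nat.cast_succ, h, ih]
  simpa using hcast i.val

theorem exists_two_mul_eq_or_eq_add_one (c : Fin q) :
    ∃ i : Fin q, 2 * i = c ∨ 2 * i = c + 1 := by
  obtain ⟨m, hm | hm⟩ := Nat.even_or_odd' c.val
  · exact ⟨m, Or.inl (by rw [← c.cast_val_eq_self, hm]; push_cast; ring)⟩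
  · exact ⟨m + 1, Or.inr (by rw [← c.cast_val_eq_self, hm]; push_cast; ring)⟩

theorem two_mul_add_one_ne_zero (hq : 2 ∣ q) (d : Fin q) : 2 * d + 1 ≠ 0 := by
  intro h
  have h2 := congrArg ((ZMod.castHom hq (ZMod 2)).comp (ZMod.finEquiv q).toRingHom) h
  rw [map_add, map_mul, map_ofNat, map_one, map_zero, show (2 : ZMod 2) = 0 from rfl,
    zero_mul, zero_add] at h2
  exact one_ne_zero h2

end Fin

section
open Fin.CommRing

variable {q : ℕ} [NeZero q] [Nontrivial (Fin q)] {ψ : Fin q → Fin q}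

theorem apply_apply_eq_or_apply_apply_add_one_eq (hψ : Injective ψ)
    (hsymm : ∀ i j, (i = ψ j ∨ i = ψ j + 1) ↔ (j = ψ i ∨ j = ψ i + 1)) (i : Fin q) :
    (ψ (ψ i) = i ∧ ψ (ψ i + 1) + 1 = i) ∨ (ψ (ψ i) + 1 = i ∧ ψ (ψ i + 1) = i) := by
  have hne : ψ (ψ i) ≠ ψ (ψ i + 1) := hψ.ne (left_ne_add.mpr one_ne_zero)
  rcases (hsymm i (ψ i)).2 (Or.inl rfl) with h₀ | h₀ <;>
    rcases (hsymm i (ψ i + 1)).2 (Or.inr rfl) with h₁ | h₁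
  · exact absurd (h₀.symm.trans h₁) hne
  · exact Or.inl ⟨h₀.symm, h₁.symm⟩
  · exact Or.inr ⟨h₀.symm, h₁.symm⟩
  · exact absurd (add_right_cancel (h₀.symm.trans h₁)) hne

theorem apply_apply_add_one_add_one_of_apply_apply_eq (hψ : Injective ψ)
    (hsymm : ∀ i j, (i = ψ j ∨ i = ψ j + 1) ↔ (j = ψ i ∨ j = ψ i + 1)) {i : Fin q}
    (hi : ψ (ψ i) = i) : ψ (ψ i + 1) + 1 = i := by
  refine (apply_apply_eq_or_apply_apply_add_one_eq hψ hsymm i).elim And.right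
    fun ⟨h, _⟩ => ?_
  rw [hi, add_eq_left] at h
  exact absurd h one_ne_zero

theorem apply_apply_add_one_eq_of_apply_apply_ne (hψ : Injective ψ)
    (hsymm : ∀ i j, (i = ψ j ∨ i = ψ j + 1) ↔ (j = ψ i ∨ j = ψ i + 1)) {i : Fin q}
    (hi : ψ (ψ i) ≠ i) : ψ (ψ i) + 1 = i :=
  ((apply_apply_eq_or_apply_apply_add_one_eq hψ hsymm i).resolve_left fun h => hi h.1).1

theorem apply_eq_apply_add_one_add_one_of_apply_apply_eq (hψ : Injective ψ)
    (hsymm : ∀ i j, (i = ψ j ∨ i = ψ j + 1) ↔ (j = ψ i ∨ j = ψ i + 1)) {i : Fin q}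
    (hi : ψ (ψ (i + 1)) = i + 1) : ψ i = ψ (i + 1) + 1 ∧ ψ (ψ i) = i := by
  have hj : ψ (ψ (i + 1) + 1) = i :=
    add_right_cancel (apply_apply_add_one_add_one_of_apply_apply_eq hψ hsymm hi)
  rcases apply_apply_eq_or_apply_apply_add_one_eq hψ hsymm (ψ (i + 1) + 1)
    with ⟨h, -⟩ | ⟨h, -⟩ <;> rw [hj] at h
  · exact ⟨h, by rw [h, hj]⟩
  · exact absurd (hψ (add_right_cancel h)) (left_ne_add.mpr one_ne_zero)

theorem apply_add_one_eq_apply_add_one_of_apply_apply_ne (hψ : Injective ψ)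
    (hsymm : ∀ i j, (i = ψ j ∨ i = ψ j + 1) ↔ (j = ψ i ∨ j = ψ i + 1)) {i : Fin q}
    (hi : ψ (ψ (i + 1)) ≠ i + 1) : ψ (i + 1) = ψ i + 1 ∧ ψ (ψ i) ≠ i := by
  have h₀ : ψ (ψ (i + 1)) = i :=
    add_right_cancel (apply_apply_add_one_eq_of_apply_apply_ne hψ hsymm hi)
  have h₁ := apply_apply_add_one_eq_of_apply_apply_ne hψ hsymm (i := ψ (i + 1))
    fun h => hi (hψ h)
  rw [h₀] at h₁
  refine ⟨h₁.symm, fun h => ?_⟩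
  rw [← h₁] at h₀
  exact left_ne_add.mpr one_ne_zero (hψ (h₀.trans h.symm)).symm

end

open Fin.CommRing in
theorem Fin.false_of_symm_of_irrefl {q : ℕ} [NeZero q] (hq : 2 ∣ q) {ψ : Fin q → Fin q}
    (hψ : Injective ψ)
    (hsymm : ∀ i j, (i = ψ j ∨ i = ψ j + 1) ↔ (j = ψ i ∨ j = ψ i + 1))
    (hirr : ∀ i, ¬(i = ψ i ∨ i = ψ i + 1)) : False := by
  have : Nontrivial (Fin q) :=
    Fin.nontrivial_iff_two_le.2 (Nat.le_of_dvd (Nat.pos_of_neZero q) hq)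
  have hconst : ∀ i, (ψ (ψ i) = i) = (ψ (ψ 0) = 0) :=
    Fin.apply_eq_apply_zero_of_apply_add_one fun i => propext
      ⟨fun h => (apply_eq_apply_add_one_add_one_of_apply_apply_eq hψ hsymm h).2,
        fun h => by_contra fun h' =>
          (apply_add_one_eq_apply_add_one_of_apply_apply_ne hψ hsymm h').2 h⟩
  by_cases h0 : ψ (ψ 0) = 0
  · have hc : ∀ i, ψ i + i = ψ 0 + 0 :=
      Fin.apply_eq_apply_zero_of_apply_add_one (f := fun i => ψ i + i) fun i => by
        have hP : ψ (ψ (i + 1)) = i + 1 := (hconst _).mpr h0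
        rw [(apply_eq_apply_add_one_add_one_of_apply_apply_eq hψ hsymm hP).1]
        ring
    obtain ⟨i, hi | hi⟩ := Fin.exists_two_mul_eq_or_eq_add_one (ψ 0)
    · exact hirr i (Or.inl (by linear_combination hi - hc i))
    · exact hirr i (Or.inr (by linear_combination hi - hc i))
  · have hd : ∀ i, ψ i - i = ψ 0 - 0 :=
      Fin.apply_eq_apply_zero_of_apply_add_one (f := fun i => ψ i - i) fun i => by
        have hP : ψ (ψ (i + 1)) ≠ i + 1 := fun h => h0 ((hconst _).mp h)
        rw [(apply_add_one_eq_apply_add_one_of_apply_apply_ne hψ hsymm hP).1]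
        ring
    have h1 := apply_apply_add_one_eq_of_apply_apply_ne hψ hsymm h0
    exact Fin.two_mul_add_one_ne_zero hq (ψ 0) (by linear_combination h1 - hd (ψ 0))

theorem wheelFaceMem_inl_inl {q : ℕ} [NeZero q] {i j : Fin q} :
    wheelFaceMem q (.inl i) (.inl j) ↔ i = j ∨ i = j + 1 := by
  simp [wheelFaceMem]

theorem wheelFaceMem_inr_inl {q : ℕ} [NeZero q] (u : Unit) (j : Fin q) :
    wheelFaceMem q (.inr u) (.inl j) := by
  simp [wheelFaceMem]

theorem Equiv.exists_injective_map_inl {α : Type*} (τ : α ⊕ Unit ≃ α ⊕ Unit)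
    (h : τ (.inr ()) = .inr ()) :
    ∃ ψ : α → α, Injective ψ ∧ ∀ a, τ (.inl a) = .inl (ψ a) := by
  have hinl : ∀ a, ∃ b, τ (.inl a) = .inl b := fun a => by
    rcases ha : τ (.inl a) with b | _
    · exact ⟨b, rfl⟩
    · simpa using τ.injective (ha.trans h.symm)
  choose ψ hψ using hinl
  refine ⟨ψ, fun a b hab => ?_, hψ⟩
  simpa using τ.injective ((hψ a).trans ((congrArg Sum.inl hab).trans (hψ b).symm))

theorem map_inr_eq_inr_of_not_wheelFaceMem {q : ℕ} [NeZero q]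
    (τ : Fin q ⊕ Unit ≃ Fin q ⊕ Unit) (hirr : ∀ v, ¬ wheelFaceMem q v (τ v)) :
    τ (.inr ()) = .inr () := by
  rcases h : τ (.inr ()) with i | _
  · exact absurd (h ▸ wheelFaceMem_inr_inl () i) (hirr _)
  · rfl

theorem even_wheel_no_strong_involution_general (q k : ℕ) [NeZero q]
    (hqk : q = 2 * k) :
    ¬ ∃ τ : (Fin q ⊕ Unit) ≃ (Fin q ⊕ Unit),
      (∀ u v : Fin q ⊕ Unit, (wheel q).Adj u v ↔ (wheelDual q).Adj (τ u) (τ v)) ∧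
      (∀ u v : Fin q ⊕ Unit, wheelFaceMem q u (τ v) ↔ wheelFaceMem q v (τ u)) ∧
      (∀ v : Fin q ⊕ Unit, ¬ wheelFaceMem q v (τ v)) := by
  rintro ⟨τ, -, hsymm, hirr⟩
  obtain ⟨ψ, hψ, hτ⟩ :=
    τ.exists_injective_map_inl (map_inr_eq_inr_of_not_wheelFaceMem τ hirr)
  refine Fin.false_of_symm_of_irrefl ⟨k, hqk⟩ hψ (fun i j => ?_) (fun i => ?_)
  · simpa only [hτ, wheelFaceMem_inl_inl] using hsymm (.inl i) (.inl j)
  · simpa only [hτ, wheelFaceMem_inl_inl] using hirr (.inl i)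

/-- For even `q = 2k ≥ 4`, the wheel graph `W_q` admits no strong involution:
there is no duality isomorphism (a bijection from vertices to faces carrying
adjacency of the wheel to adjacency of the dual) satisfying both
`u ∈ τ(v) ↔ v ∈ τ(u)` and `v ∉ τ(v)` for all vertices. -/
theorem even_wheel_no_strong_involution (q k : ℕ) [NeZero q]
    (hqk : q = 2 * k) (hk : 2 ≤ k) :
    ¬ ∃ τ : (Fin q ⊕ Unit) ≃ (Fin q ⊕ Unit),
      (∀ u v : Fin q ⊕ Unit, (wheel q).Adj u v ↔ (wheelDual q).Adj (τ u) (τ v)) ∧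
      (∀ u v : Fin q ⊕ Unit, wheelFaceMem q u (τ v) ↔ wheelFaceMem q v (τ u)) ∧
      (∀ v : Fin q ⊕ Unit, ¬ wheelFaceMem q v (τ v)) :=
  even_wheel_no_strong_involution_general q k hqk
end
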